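/- (Wedin bound, under-specified rank) Let A be a rank-r matrix with rank-r̃ truncated SVD A_1 (r̃ < r) and write A = A_1 + A_0. Let Ã = Ũ Σ̃ Ṽ^T be the rank-r̃ truncated SVD of X = A + E. Then the sine of the largest principal angle between row(A_1) and row(Ã) is at most min( max(‖(E + A_0) Ṽ‖, ‖(E + A_0)^T Ũ‖) / σ_min(Ã), 1 ). -/

import Mathlib

open Matrix

/-- View a plain vector as an element of Euclidean space. -/
noncomputable def toEuc {n : ℕ} (v : Fin n → ℝ) : EuclideanSpace ℝ (Fin n) := WithLp.toLp 2 v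

/-- The row space of a matrix, as a subspace of Euclidean space `ℝ^n`. -/
noncomputable def rowSpace {m : Type*} {n : ℕ} (A : Matrix m (Fin n) ℝ) :
    Submodule ℝ (EuclideanSpace ℝ (Fin n)) :=
  Submodule.span ℝ (Set.range fun i => toEuc (A i))

/-- The orthogonal projection matrix onto a subspace of `ℝ^n`. -/
noncomputable def projMat {n : ℕ} (U : Submodule ℝ (EuclideanSpace ℝ (Fin n))) :
    Matrix (Fin n) (Fin n) ℝ :=
  Matrix.toEuclideanLin.symm (U.subtype ∘ₗ (U.orthogonalProjectionOnto).toLinearMap)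

/-- The operator (spectral) norm of a matrix. -/
noncomputable def opNorm {m : Type*} [Fintype m] {n : ℕ} (A : Matrix m (Fin n) ℝ) : ℝ :=
  ‖(Matrix.toEuclideanLin A).toContinuousLinearMap‖

/-- Singular values of a matrix, in ascending order. -/
noncomputable def svalAsc {m : Type*} [Fintype m] {n : ℕ} (A : Matrix m (Fin n) ℝ) :
    Fin n → ℝ := fun i =>
  Real.sqrt ((by simpa using Matrix.isHermitian_conjTranspose_mul_self A :
      (Aᵀ * A).IsHermitian).eigenvalues
    (Tuple.sort (by simpa using Matrix.isHermitian_conjTranspose_mul_self A :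
      (Aᵀ * A).IsHermitian).eigenvalues i))

/-- Singular values of a matrix, in descending order (`svalDesc A 0` is the largest). -/
noncomputable def svalDesc {m : Type*} [Fintype m] {n : ℕ} (A : Matrix m (Fin n) ℝ)
    (i : Fin n) : ℝ :=
  svalAsc A i.rev

/-!
The two projections are `Ṽ Ṽᵀ` and `V₁ V₁ᵀ`. Writing `Z = E + A₀`, we have `Xᵀ = Zᵀ + V₁ Σ₁ U₁ᵀ`,
so applying `1 - V₁ V₁ᵀ` to `Xᵀ Ũ = Ṽ Σ̃` kills the `A₁` part:
`(1 - V₁ V₁ᵀ) Ṽ Σ̃ = (1 - V₁ V₁ᵀ) Zᵀ Ũ`, whence `‖(1 - V₁ V₁ᵀ) Ṽ‖ ≤ ‖Zᵀ Ũ‖ / σ_min(Ã)`.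
Both subspaces have dimension `r̃`, so `M = V₁ᵀ Ṽ` is square. By Pythagoras,
`‖M y‖² ≥ (1 - a²) ‖y‖²` with `a = ‖(1 - V₁ V₁ᵀ) Ṽ‖`; for a square matrix such a lower bound
passes to `Mᵀ`, and Pythagoras once more gives `‖(1 - Ṽ Ṽᵀ) V₁‖ ≤ a`.
The bound by `1` holds because orthogonal projections are contractions.
-/

open WithLp
open scoped Matrix.Norms.L2Operator

section RowSpace

variable {m k : Type*} [Fintype k] {n : ℕ}

theorem toEuc_vecMul_mem_rowSpace (v : k → ℝ) (N : Matrix k (Fin n) ℝ) :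
    toEuc (v ᵥ* N) ∈ rowSpace N := by
  have h : toEuc (v ᵥ* N) = ∑ i, v i • toEuc (N i) := by
    ext j
    simp [toEuc, vecMul, dotProduct]
  rw [h]
  exact Submodule.sum_mem _ fun i _ => Submodule.smul_mem _ _ (Submodule.subset_span ⟨i, rfl⟩)

theorem rowSpace_mul_le (M : Matrix m k ℝ) (N : Matrix k (Fin n) ℝ) :
    rowSpace (M * N) ≤ rowSpace N := by
  rw [rowSpace, Submodule.span_le]
  rintro _ ⟨i, rfl⟩
  exact toEuc_vecMul_mem_rowSpace (M i) N

theorem rowSpace_mul_of_mul_eq_one [Fintype m] [DecidableEq k] {B : Matrix m k ℝ}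
    {C : Matrix k m ℝ} (h : C * B = 1) (N : Matrix k (Fin n) ℝ) :
    rowSpace (B * N) = rowSpace N := by
  refine le_antisymm (rowSpace_mul_le B N) ?_
  simpa [← Matrix.mul_assoc, h] using rowSpace_mul_le C (B * N)

theorem projMat_rowSpace_transpose [DecidableEq k] {V : Matrix (Fin n) k ℝ} (hV : Vᵀ * V = 1) :
    projMat (rowSpace Vᵀ) = V * Vᵀ := by
  rw [projMat, LinearEquiv.symm_apply_eq]
  refine LinearMap.ext fun x => Submodule.eq_starProjection_of_mem_orthogonal ?_ ?_
  · convert toEuc_vecMul_mem_rowSpace (Vᵀ *ᵥ x.ofLp) Vᵀ using 1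
    rw [vecMul_transpose, mulVec_mulVec]
    rfl
  · have hperp : Vᵀ *ᵥ (x.ofLp - (V * Vᵀ) *ᵥ x.ofLp) = 0 := by
      rw [mulVec_sub, mulVec_mulVec, ← Matrix.mul_assoc, hV, Matrix.one_mul, sub_self]
    rw [← Submodule.span_singleton_le_iff_mem, ← Submodule.isOrtho_iff_le, rowSpace,
      Submodule.isOrtho_span]
    rintro _ rfl _ ⟨j, rfl⟩
    simpa [toEuc, EuclideanSpace.inner_eq_star_dotProduct, mulVec, dotProduct, mul_comm]
      using congrFun hperp j

theorem projMat_rowSpace_mul_diagonal_mul_transpose [Fintype m] [DecidableEq k]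
    {U : Matrix m k ℝ} {V : Matrix (Fin n) k ℝ} {σ : k → ℝ} (hU : Uᵀ * U = 1)
    (hV : Vᵀ * V = 1) (hσ : ∀ i, σ i ≠ 0) :
    projMat (rowSpace (U * diagonal σ * Vᵀ)) = V * Vᵀ := by
  have h : (diagonal σ⁻¹ * Uᵀ) * (U * diagonal σ) = 1 := by
    rw [Matrix.mul_assoc, ← Matrix.mul_assoc Uᵀ, hU, Matrix.one_mul, diagonal_mul_diagonal,
      ← diagonal_one]
    congr 1
    ext i
    simp [hσ i]
  rw [rowSpace_mul_of_mul_eq_one h, projMat_rowSpace_transpose hV]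

end RowSpace

section L2OpNorm

variable {ι κ μ : Type*} [Fintype ι] [Fintype κ] [Fintype μ] [DecidableEq κ]

theorem opNorm_eq_l2_opNorm {n : ℕ} (A : Matrix ι (Fin n) ℝ) : opNorm A = ‖A‖ := rfl

theorem norm_toLp_mulVec_le (A : Matrix ι κ ℝ) (x : κ → ℝ) :
    ‖toLp 2 (A *ᵥ x)‖ ≤ ‖A‖ * ‖toLp 2 x‖ :=
  l2_opNorm_mulVec A (toLp 2 x)

theorem l2_opNorm_le_of_norm_toLp_mulVec_le {A : Matrix ι κ ℝ} {c : ℝ} (hc : 0 ≤ c)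
    (h : ∀ x, ‖toLp 2 (A *ᵥ x)‖ ≤ c * ‖toLp 2 x‖) : ‖A‖ ≤ c :=
  ContinuousLinearMap.opNorm_le_bound _ hc fun x => h x.ofLp

theorem l2_opNorm_transpose [DecidableEq ι] (A : Matrix ι κ ℝ) : ‖Aᵀ‖ = ‖A‖ := by
  simpa using l2_opNorm_conjTranspose A

omit [DecidableEq κ] in
theorem norm_toLp_sq (x : κ → ℝ) : ‖toLp 2 x‖ ^ 2 = x ⬝ᵥ x := by
  rw [← real_inner_self_eq_norm_sq, EuclideanSpace.inner_eq_star_dotProduct]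
  rfl

omit [DecidableEq κ] in
theorem norm_toLp_mulVec_sq (B : Matrix ι κ ℝ) (x : κ → ℝ) :
    ‖toLp 2 (B *ᵥ x)‖ ^ 2 = x ⬝ᵥ ((Bᵀ * B) *ᵥ x) := by
  rw [norm_toLp_sq, ← mulVec_mulVec, dotProduct_mulVec x, vecMul_transpose]

theorem norm_toLp_mulVec_of_transpose_mul_self_eq_one {V : Matrix ι κ ℝ} (hV : Vᵀ * V = 1)
    (x : κ → ℝ) : ‖toLp 2 (V *ᵥ x)‖ = ‖toLp 2 x‖ := by
  rw [← sq_eq_sq₀ (norm_nonneg _) (norm_nonneg _), norm_toLp_mulVec_sq, hV, one_mulVec,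
    norm_toLp_sq]

theorem l2_opNorm_le_one_of_transpose_mul_self_eq_one {V : Matrix ι κ ℝ} (hV : Vᵀ * V = 1) :
    ‖V‖ ≤ 1 :=
  l2_opNorm_le_of_norm_toLp_mulVec_le zero_le_one fun x => by
    rw [norm_toLp_mulVec_of_transpose_mul_self_eq_one hV, one_mul]

theorem norm_toLp_sq_eq_add_of_transpose_mul_self_eq_one [DecidableEq ι] {V : Matrix ι κ ℝ}
    (hV : Vᵀ * V = 1) (x : ι → ℝ) :
    ‖toLp 2 x‖ ^ 2 = ‖toLp 2 (Vᵀ *ᵥ x)‖ ^ 2 + ‖toLp 2 ((1 - V * Vᵀ) *ᵥ x)‖ ^ 2 := by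
  have hP : V * Vᵀ * (V * Vᵀ) = V * Vᵀ := by
    rw [Matrix.mul_assoc, ← Matrix.mul_assoc Vᵀ, hV, Matrix.one_mul]
  have h : Vᵀᵀ * Vᵀ + (1 - V * Vᵀ)ᵀ * (1 - V * Vᵀ) = 1 := by
    simp only [transpose_transpose, transpose_sub, transpose_one, transpose_mul, sub_mul, mul_sub,
      Matrix.one_mul, Matrix.mul_one, hP]
    abel
  rw [norm_toLp_mulVec_sq, norm_toLp_mulVec_sq, ← dotProduct_add, ← add_mulVec, h, one_mulVec,
    norm_toLp_sq]

theorem l2_opNorm_one_sub_mul_transpose_le_one [DecidableEq ι] {V : Matrix ι κ ℝ}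
    (hV : Vᵀ * V = 1) : ‖1 - V * Vᵀ‖ ≤ 1 :=
  l2_opNorm_le_of_norm_toLp_mulVec_le zero_le_one fun x => by
    have h := norm_toLp_sq_eq_add_of_transpose_mul_self_eq_one hV x
    rw [one_mul, ← sq_le_sq₀ (norm_nonneg _) (norm_nonneg _)]
    nlinarith [sq_nonneg ‖toLp 2 (Vᵀ *ᵥ x)‖]

theorem l2_opNorm_one_sub_mul_transpose_mul_le_l2_opNorm [DecidableEq ι] [DecidableEq μ]
    {V : Matrix ι κ ℝ} (hV : Vᵀ * V = 1) (B : Matrix ι μ ℝ) : ‖(1 - V * Vᵀ) * B‖ ≤ ‖B‖ :=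
  (l2_opNorm_mul _ _).trans
    (mul_le_of_le_one_left (norm_nonneg _) (l2_opNorm_one_sub_mul_transpose_le_one hV))

theorem l2_opNorm_mul_transpose_le_l2_opNorm [DecidableEq ι] {V : Matrix ι κ ℝ}
    (hV : Vᵀ * V = 1) (B : Matrix μ κ ℝ) : ‖B * Vᵀ‖ ≤ ‖B‖ :=
  (l2_opNorm_mul _ _).trans (mul_le_of_le_one_right (norm_nonneg _)
    ((l2_opNorm_transpose V).trans_le (l2_opNorm_le_one_of_transpose_mul_self_eq_one hV)))

theorem l2_opNorm_le_l2_opNorm_mul_diagonal_div (B : Matrix ι κ ℝ) {σ : κ → ℝ} {s : ℝ}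
    (hs : 0 < s) (hσ : ∀ i, s ≤ σ i) : ‖B‖ ≤ ‖B * diagonal σ‖ / s := by
  have hB : B * diagonal σ * diagonal σ⁻¹ = B := by
    have hσσ : (fun i => σ i * σ⁻¹ i) = 1 :=
      funext fun i => mul_inv_cancel₀ (hs.trans_le (hσ i)).ne'
    rw [Matrix.mul_assoc, diagonal_mul_diagonal, hσσ, diagonal_one', Matrix.mul_one]
  have hinv : ‖(diagonal σ⁻¹ : Matrix κ κ ℝ)‖ ≤ s⁻¹ := by
    rw [l2_opNorm_diagonal, pi_norm_le_iff_of_nonneg (by positivity)]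
    intro i
    rw [Pi.inv_apply, norm_inv, Real.norm_of_nonneg (hs.le.trans (hσ i))]
    exact inv_anti₀ hs (hσ i)
  calc ‖B‖ = ‖B * diagonal σ * diagonal σ⁻¹‖ := by rw [hB]
    _ ≤ ‖B * diagonal σ‖ * s⁻¹ := (l2_opNorm_mul _ _).trans (by gcongr)
    _ = ‖B * diagonal σ‖ / s := (div_eq_mul_inv _ _).symm

theorem le_norm_toLp_transpose_mulVec_sq {M : Matrix κ κ ℝ} {c : ℝ}
    (hM : ∀ y, c * ‖toLp 2 y‖ ^ 2 ≤ ‖toLp 2 (M *ᵥ y)‖ ^ 2) (x : κ → ℝ) :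
    c * ‖toLp 2 x‖ ^ 2 ≤ ‖toLp 2 (Mᵀ *ᵥ x)‖ ^ 2 := by
  rcases le_or_gt c 0 with hc | hc
  · exact (mul_nonpos_of_nonpos_of_nonneg hc (sq_nonneg _)).trans (sq_nonneg _)
  have hinj : Function.Injective M.mulVec := by
    refine (injective_iff_map_eq_zero M.mulVecLin).2 fun y hy => ?_
    have h := hM y
    rw [mulVecLin_apply] at hy
    rw [hy, toLp_zero, norm_zero, zero_pow two_ne_zero] at h
    simpa using nonpos_of_mul_nonpos_right h hc
  -- `M` is square, so injectivity gives surjectivity: write `x = M y`.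
  obtain ⟨y, rfl⟩ := mulVec_surjective_iff_isUnit.2 (mulVec_injective_iff_isUnit.1 hinj) x
  have hcs : ‖toLp 2 (M *ᵥ y)‖ ^ 2 ≤ ‖toLp 2 y‖ * ‖toLp 2 (Mᵀ *ᵥ (M *ᵥ y))‖ := by
    have h := real_inner_le_norm (toLp 2 y) (toLp 2 (Mᵀ *ᵥ (M *ᵥ y)))
    rwa [EuclideanSpace.inner_eq_star_dotProduct, ofLp_toLp, ofLp_toLp, star_trivial,
      dotProduct_comm, mulVec_mulVec, ← norm_toLp_mulVec_sq, ← mulVec_mulVec] at h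
  have hMy := hM y
  generalize ‖toLp 2 (M *ᵥ y)‖ = u at hcs hMy ⊢
  generalize ‖toLp 2 y‖ = s at hcs hMy
  generalize ‖toLp 2 (Mᵀ *ᵥ (M *ᵥ y))‖ = t at hcs ⊢
  rcases (sq_nonneg u).eq_or_lt with hu | hu
  · rw [← hu, mul_zero]
    positivity
  -- `c u⁴ ≤ c (s t)² = (c s²) t² ≤ u² t²`
  have h4 : c * u ^ 2 * u ^ 2 ≤ t ^ 2 * u ^ 2 := by
    nlinarith [mul_le_mul_of_nonneg_left (pow_le_pow_left₀ (sq_nonneg u) hcs 2) hc.le,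
      mul_le_mul_of_nonneg_right hMy (sq_nonneg t)]
  exact le_of_mul_le_mul_right h4 hu

theorem l2_opNorm_one_sub_mul_transpose_mul_le [DecidableEq ι] {V W : Matrix ι κ ℝ}
    (hV : Vᵀ * V = 1) (hW : Wᵀ * W = 1) : ‖(1 - W * Wᵀ) * V‖ ≤ ‖(1 - V * Vᵀ) * W‖ := by
  set a := ‖(1 - V * Vᵀ) * W‖
  have hlow : ∀ y, (1 - a ^ 2) * ‖toLp 2 y‖ ^ 2 ≤ ‖toLp 2 ((Vᵀ * W) *ᵥ y)‖ ^ 2 := by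
    intro y
    have hpyth := norm_toLp_sq_eq_add_of_transpose_mul_self_eq_one hV (W *ᵥ y)
    rw [norm_toLp_mulVec_of_transpose_mul_self_eq_one hW, mulVec_mulVec, mulVec_mulVec] at hpyth
    have hQ := pow_le_pow_left₀ (norm_nonneg _) (norm_toLp_mulVec_le ((1 - V * Vᵀ) * W) y) 2
    nlinarith
  refine l2_opNorm_le_of_norm_toLp_mulVec_le (norm_nonneg _) fun x => ?_
  have hpyth := norm_toLp_sq_eq_add_of_transpose_mul_self_eq_one hW (V *ᵥ x)
  rw [norm_toLp_mulVec_of_transpose_mul_self_eq_one hV, mulVec_mulVec, mulVec_mulVec] at hpyth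
  have hup := le_norm_toLp_transpose_mulVec_sq hlow x
  rw [transpose_mul, transpose_transpose] at hup
  rw [← sq_le_sq₀ (norm_nonneg _) (by positivity), mul_pow]
  linarith

end L2OpNorm

theorem one_sub_mul_transpose_mul_self_eq_zero {ι κ : Type*} [Fintype ι] [Fintype κ]
    [DecidableEq ι] [DecidableEq κ] {V : Matrix ι κ ℝ} (hV : Vᵀ * V = 1) :
    (1 - V * Vᵀ) * V = 0 := by
  rw [Matrix.sub_mul, Matrix.one_mul, Matrix.mul_assoc, hV, Matrix.mul_one, sub_self]

theorem l2_opNorm_one_sub_mul_transpose_mul_le_div {ι κ μ ν : Type*} [Fintype ι] [Fintype κ]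
    [Fintype μ] [Fintype ν] [DecidableEq ι] [DecidableEq κ] [DecidableEq ν]
    {V : Matrix ι κ ℝ} {W : Matrix ι ν ℝ} {U : Matrix μ ν ℝ} {Y : Matrix μ ι ℝ} {σ : ν → ℝ}
    {s : ℝ} (hV : Vᵀ * V = 1) (hs : 0 < s) (hσ : ∀ i, s ≤ σ i)
    (hY : Yᵀ * U = W * diagonal σ) (B : Matrix μ κ ℝ) :
    ‖(1 - V * Vᵀ) * W‖ ≤ ‖(Y - B * Vᵀ)ᵀ * U‖ / s := by
  have hcompl : (1 - V * Vᵀ) * W * diagonal σ = (1 - V * Vᵀ) * ((Y - B * Vᵀ)ᵀ * U) := by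
    rw [Matrix.mul_assoc (1 - V * Vᵀ), ← hY, transpose_sub, Matrix.sub_mul Yᵀ,
      Matrix.mul_sub (1 - V * Vᵀ), transpose_mul, transpose_transpose, Matrix.mul_assoc V,
      ← Matrix.mul_assoc (1 - V * Vᵀ) V, one_sub_mul_transpose_mul_self_eq_zero hV,
      Matrix.zero_mul, sub_zero]
  calc ‖(1 - V * Vᵀ) * W‖ ≤ ‖(1 - V * Vᵀ) * W * diagonal σ‖ / s :=
        l2_opNorm_le_l2_opNorm_mul_diagonal_div _ hs hσ
    _ ≤ ‖(Y - B * Vᵀ)ᵀ * U‖ / s := by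
        rw [hcompl]
        gcongr
        exact l2_opNorm_one_sub_mul_transpose_mul_le_l2_opNorm hV _

theorem wedin_bound_under_rank (d n rt : ℕ) (hrt : 0 < rt)
    (A E X : Matrix (Fin d) (Fin n) ℝ) (hX : X = A + E)
    -- rank-`rt` truncated SVD `A₁` of `A`
    (U1 : Matrix (Fin d) (Fin rt) ℝ) (V1 : Matrix (Fin n) (Fin rt) ℝ) (σ1 : Fin rt → ℝ)
    (hU1 : U1ᵀ * U1 = 1) (hV1 : V1ᵀ * V1 = 1)
    (hσ1pos : ∀ i, 0 < σ1 i)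
    -- rank-`rt` truncated SVD `Ã` of `X`
    (Ut : Matrix (Fin d) (Fin rt) ℝ) (Vt : Matrix (Fin n) (Fin rt) ℝ) (σd : Fin rt → ℝ)
    (hUt : Utᵀ * Ut = 1) (hVt : Vtᵀ * Vt = 1)
    (hσpos : ∀ i, 0 < σd i) (hσmono : Antitone σd)
    (hsv2 : Xᵀ * Ut = Vt * Matrix.diagonal σd) :
    opNorm ((1 - projMat (rowSpace (Ut * Matrix.diagonal σd * Vtᵀ))) *
        projMat (rowSpace (U1 * Matrix.diagonal σ1 * V1ᵀ)))
      ≤ min (max (opNorm ((E + (A - U1 * Matrix.diagonal σ1 * V1ᵀ)) * Vt))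
              (opNorm ((E + (A - U1 * Matrix.diagonal σ1 * V1ᵀ))ᵀ * Ut))
            / σd ⟨rt - 1, by omega⟩) 1 := by
  have hZ : E + (A - U1 * diagonal σ1 * V1ᵀ) = X - U1 * diagonal σ1 * V1ᵀ := by
    rw [hX]
    abel
  rw [projMat_rowSpace_mul_diagonal_mul_transpose hUt hVt fun i => (hσpos i).ne',
    projMat_rowSpace_mul_diagonal_mul_transpose hU1 hV1 fun i => (hσ1pos i).ne',
    opNorm_eq_l2_opNorm, opNorm_eq_l2_opNorm, opNorm_eq_l2_opNorm, hZ]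
  have hsin :
      ‖(1 - V1 * V1ᵀ) * Vt‖ ≤ ‖(X - U1 * diagonal σ1 * V1ᵀ)ᵀ * Ut‖ / σd ⟨rt - 1, by omega⟩ :=
    l2_opNorm_one_sub_mul_transpose_mul_le_div hV1 (hσpos _)
      (fun i => hσmono (Fin.le_iff_val_le_val.2 (Nat.le_sub_one_of_lt i.2))) hsv2 _
  calc ‖(1 - Vt * Vtᵀ) * (V1 * V1ᵀ)‖ ≤ ‖(1 - Vt * Vtᵀ) * V1‖ := by
        rw [← Matrix.mul_assoc]
        exact l2_opNorm_mul_transpose_le_l2_opNorm hV1 _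
    _ ≤ _ :=
        le_min ((l2_opNorm_one_sub_mul_transpose_mul_le hV1 hVt).trans (hsin.trans
            (div_le_div_of_nonneg_right (le_max_right _ _) (hσpos _).le)))
          ((l2_opNorm_one_sub_mul_transpose_mul_le_l2_opNorm hVt V1).trans
            (l2_opNorm_le_one_of_transpose_mul_self_eq_one hV1))
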